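/- The fast diffusion p-Laplacian Barenblatt function B is smooth on (ℝ^N \ {0}) × (0,∞) and satisfies the p-Laplacian evolution equation pointwise there: ∂B/∂t (x,t) = div_x (|∇_x B(x,t)|^{p-2} ∇_x B(x,t)) for all x ≠ 0 and t > 0. -/

import Mathlib

open MeasureTheory Real Filter Topology Set

noncomputable section

/-- Divergence of a vector field `V : ℝ^N → ℝ^N` at `x`: sum of the derivatives
of the components along the coordinate directions. -/
def divg {N : ℕ} (V : EuclideanSpace ℝ (Fin N) → EuclideanSpace ℝ (Fin N))
    (x : EuclideanSpace ℝ (Fin N)) : ℝ :=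
  ∑ i : Fin N, deriv (fun s : ℝ => V (x + s • EuclideanSpace.single i (1 : ℝ)) i) 0

/-- `λ = N(p-2)+p`. -/
def pleLambda (N : ℕ) (p : ℝ) : ℝ := N * (p - 2) + p

/-- `β = 1/λ`. -/
def pleBeta (N : ℕ) (p : ℝ) : ℝ := 1 / pleLambda N p

/-- `α = Nβ`. -/
def pleAlpha (N : ℕ) (p : ℝ) : ℝ := N * pleBeta N p

/-- `k = ((2-p)/p) λ^{-1/(p-1)}`. -/
def pleK (N : ℕ) (p : ℝ) : ℝ := (2 - p) / p * pleLambda N p ^ (-(1 / (p - 1)))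

/-- The Barenblatt solution
`B(x,t) = t^{-α} (C + k (|x| t^{-β})^{p/(p-1)})^{-(p-1)/(2-p)}`
of the `p`-Laplacian evolution equation, for `p_c < p < 2`. -/
def pleBarenblatt (N : ℕ) (p C : ℝ) (x : EuclideanSpace ℝ (Fin N)) (t : ℝ) : ℝ :=
  t ^ (-pleAlpha N p) *
    (C + pleK N p * (‖x‖ * t ^ (-pleBeta N p)) ^ (p / (p - 1))) ^ (-((p - 1) / (2 - p)))

/-! ### Auxiliary definitions -/

/-- `W(t,s) = C + k t^{-βa} s^{a/2}` with `a = p/(p-1)`, so that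
`B(x,t) = t^{-α} W(t,‖x‖²)^{-m}` with `m = (p-1)/(2-p)`. -/
def pW (N : ℕ) (p C t s : ℝ) : ℝ :=
  C + pleK N p * t ^ (-(pleBeta N p * (p / (p - 1)))) * s ^ (p / (p - 1) / 2)

/-- `∂W/∂s`. -/
def pWs (N : ℕ) (p C t s : ℝ) : ℝ :=
  pleK N p * t ^ (-(pleBeta N p * (p / (p - 1)))) *
    (p / (p - 1) / 2 * s ^ (p / (p - 1) / 2 - 1))

/-- `∂/∂s (t^{-α} W^{-m})`. -/
def pBsd (N : ℕ) (p C t s : ℝ) : ℝ :=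
  t ^ (-pleAlpha N p) *
    (pWs N p C t s * -((p - 1) / (2 - p)) * pW N p C t s ^ (-((p - 1) / (2 - p)) - 1))

/-- The radial flux coefficient: `|∇B|^{p-2}∇B (y) = pG(t,‖y‖²) • y`. -/
def pG (N : ℕ) (p C t s : ℝ) : ℝ :=
  -(1 / pleLambda N p) * t ^ (-pleAlpha N p - 1) * pW N p C t s ^ (-((p - 1) / (2 - p)))

/-- `∂pG/∂s`. -/
def pGd (N : ℕ) (p C t s : ℝ) : ℝ :=
  -(1 / pleLambda N p) * t ^ (-pleAlpha N p - 1) *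
    (pWs N p C t s * -((p - 1) / (2 - p)) * pW N p C t s ^ (-((p - 1) / (2 - p)) - 1))

/-! ### Generic helpers -/

lemma hasGradientAt_comp_norm_sq {F : Type*} [NormedAddCommGroup F] [InnerProductSpace ℝ F]
    [CompleteSpace F] {g : ℝ → ℝ} {g' : ℝ} (y : F) (hg : HasDerivAt g g' (‖y‖ ^ 2)) :
    HasGradientAt (fun z => g (‖z‖ ^ 2)) ((2 * g') • y) y := by
  have h1 : HasFDerivAt (fun z : F => ‖z‖ ^ 2) (2 • (innerSL ℝ y)) y :=
    (hasStrictFDerivAt_norm_sq y).hasFDerivAt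
  have h2 := HasDerivAt.comp_hasFDerivAt y hg h1
  rw [hasGradientAt_iff_hasFDerivAt]
  convert h2 using 1
  ext z
  simp [InnerProductSpace.toDual_apply_apply, real_inner_smul_left, ContinuousLinearMap.smul_apply,
    smul_eq_mul]
  · rfl
  · ext z
    simp [InnerProductSpace.toDual_apply_apply, real_inner_smul_left, ContinuousLinearMap.smul_apply,
      smul_eq_mul]
    ring

lemma sum_sq_eq_norm_sq {N : ℕ} (x : EuclideanSpace ℝ (Fin N)) :
    ∑ i, x i ^ 2 = ‖x‖ ^ 2 := by
  rw [EuclideanSpace.norm_eq, Real.sq_sqrt (by positivity)]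
  simp [Real.norm_eq_abs, sq_abs]

/-! ### Basic positivity facts -/

section main

variable {N : ℕ} {p C : ℝ}

lemma ple_one_lt (hN : 1 ≤ N) (hp₁ : 2 * N / (N + 1) < p) : 1 < p := by
  have hNR : (1:ℝ) ≤ N := by exact_mod_cast hN
  have h0 : (0:ℝ) < N + 1 := by positivity
  have h : (1:ℝ) ≤ 2 * N / (N + 1) := by rw [le_div_iff₀ h0]; linarith
  linarith

lemma pleLambda_pos (hN : 1 ≤ N) (hp₁ : 2 * N / (N + 1) < p) : 0 < pleLambda N p := by
  have h0 : (0:ℝ) < N + 1 := by positivity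
  have h2 := (div_lt_iff₀ h0).1 hp₁
  unfold pleLambda; nlinarith

lemma pleK_pos (hN : 1 ≤ N) (hp₁ : 2 * N / (N + 1) < p) (hp₂ : p < 2) : 0 < pleK N p := by
  have hp1 := ple_one_lt hN hp₁
  have := pleLambda_pos hN hp₁
  have hp0 : 0 < p := by linarith
  have h2p : 0 < 2 - p := by linarith
  unfold pleK
  exact mul_pos (div_pos h2p hp0) (Real.rpow_pos_of_pos this _)

lemma pW_pos (hN : 1 ≤ N) (hp₁ : 2 * N / (N + 1) < p) (hp₂ : p < 2) (hC : 0 < C)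
    {t s : ℝ} (ht : 0 < t) (hs : 0 ≤ s) : 0 < pW N p C t s := by
  have hk0 := pleK_pos hN hp₁ hp₂
  have h1 : 0 ≤ pleK N p * t ^ (-(pleBeta N p * (p / (p - 1)))) * s ^ (p / (p - 1) / 2) :=
    mul_nonneg (mul_nonneg hk0.le (Real.rpow_nonneg ht.le _)) (Real.rpow_nonneg hs _)
  unfold pW; linarith

lemma pW_hasDerivAt (hN : 1 ≤ N) {t s : ℝ} (hs : 0 < s) :
    HasDerivAt (fun s' : ℝ => pW N p C t s') (pWs N p C t s) s := by
  unfold pW pWs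
  exact ((Real.hasDerivAt_rpow_const (Or.inl hs.ne')).const_mul _).const_add C

lemma pBs_hasDerivAt (hN : 1 ≤ N) (hp₁ : 2 * N / (N + 1) < p) (hp₂ : p < 2) (hC : 0 < C)
    {t s : ℝ} (ht : 0 < t) (hs : 0 < s) :
    HasDerivAt (fun s' : ℝ => t ^ (-pleAlpha N p) * pW N p C t s' ^ (-((p - 1) / (2 - p))))
      (pBsd N p C t s) s := by
  have hW := pW_pos hN hp₁ hp₂ hC ht hs.le
  unfold pBsd
  exact (((pW_hasDerivAt hN hs).rpow_const (Or.inl hW.ne')).const_mul _)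

lemma pG_hasDerivAt (hN : 1 ≤ N) (hp₁ : 2 * N / (N + 1) < p) (hp₂ : p < 2) (hC : 0 < C)
    {t s : ℝ} (ht : 0 < t) (hs : 0 < s) :
    HasDerivAt (fun s' : ℝ => pG N p C t s') (pGd N p C t s) s := by
  have hW := pW_pos hN hp₁ hp₂ hC ht hs.le
  unfold pG pGd
  exact (((pW_hasDerivAt hN hs).rpow_const (Or.inl hW.ne')).const_mul _)

/-- `B(z,t) = t^{-α} W(t,‖z‖²)^{-m}` for `t > 0`. -/
lemma key_eq (hN : 1 ≤ N) (hp₁ : 2 * N / (N + 1) < p) {t : ℝ} (ht : 0 < t)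
    (z : EuclideanSpace ℝ (Fin N)) :
    pleBarenblatt N p C z t
      = t ^ (-pleAlpha N p) * pW N p C t (‖z‖ ^ 2) ^ (-((p - 1) / (2 - p))) := by
  unfold pleBarenblatt pW
  congr 2
  rw [Real.mul_rpow (norm_nonneg z) (Real.rpow_nonneg ht.le _)]
  rw [← Real.rpow_mul ht.le]
  have h1 : ((‖z‖ ^ 2 : ℝ)) ^ (p / (p - 1) / 2) = ‖z‖ ^ (p / (p - 1)) := by
    rw [← Real.rpow_natCast ‖z‖ 2, ← Real.rpow_mul (norm_nonneg z)]
    norm_num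
    congr 1
    ring
  rw [h1, show -pleBeta N p * (p / (p - 1)) = -(pleBeta N p * (p / (p - 1))) by ring]
  ring

/-- The gradient of `B(·,t)` at `y`. -/
lemma grad_eq (hN : 1 ≤ N) (hp₁ : 2 * N / (N + 1) < p) (hp₂ : p < 2) (hC : 0 < C)
    {t : ℝ} (ht : 0 < t) {y : EuclideanSpace ℝ (Fin N)} (hy : y ≠ 0) :
    HasGradientAt (fun z => pleBarenblatt N p C z t)
      ((2 * pBsd N p C t (‖y‖ ^ 2)) • y) y := by
  have hfun : (fun z : EuclideanSpace ℝ (Fin N) => pleBarenblatt N p C z t)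
      = fun z => (fun s' : ℝ => t ^ (-pleAlpha N p) * pW N p C t s' ^ (-((p - 1) / (2 - p))))
          (‖z‖ ^ 2) := funext fun z => key_eq hN hp₁ ht z
  rw [hfun]
  exact hasGradientAt_comp_norm_sq y
    (pBs_hasDerivAt hN hp₁ hp₂ hC ht (pow_pos (norm_pos_iff.2 hy) 2))

lemma exp_mak (hN : 1 ≤ N) (hp₁ : 2 * N / (N + 1) < p) (hp₂ : p < 2) :
    (p - 1) / (2 - p) * (p / (p - 1)) * pleK N p = pleLambda N p ^ (-(1 / (p - 1))) := by
  have hp1 := ple_one_lt hN hp₁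
  have hp0 : p ≠ 0 := by linarith
  have hpm1 : p - 1 ≠ 0 := by intro h; linarith [h]
  have h2p : (2:ℝ) - p ≠ 0 := by intro h; linarith [h]
  unfold pleK
  field_simp

lemma exp_t (hN : 1 ≤ N) (hp₁ : 2 * N / (N + 1) < p) :
    (-pleAlpha N p - pleBeta N p * (p / (p - 1))) * (p - 1) = -pleAlpha N p - 1 := by
  have hp1 := ple_one_lt hN hp₁
  have hL := pleLambda_pos hN hp₁
  have hLne : pleLambda N p ≠ 0 := hL.ne'
  have hpm1 : p - 1 ≠ 0 := by intro h; linarith [h]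
  unfold pleAlpha pleBeta pleLambda at *
  field_simp
  ring

lemma flux_eq (hN : 1 ≤ N) (hp₁ : 2 * N / (N + 1) < p) (hp₂ : p < 2) (hC : 0 < C)
    {t : ℝ} (ht : 0 < t) {y : EuclideanSpace ℝ (Fin N)} (hy : y ≠ 0) :
    ‖(2 * pBsd N p C t (‖y‖ ^ 2)) • y‖ ^ (p - 2) • ((2 * pBsd N p C t (‖y‖ ^ 2)) • y)
      = pG N p C t (‖y‖ ^ 2) • y := by
  have hp1 := ple_one_lt hN hp₁
  have hL := pleLambda_pos hN hp₁
  have hk0 := pleK_pos hN hp₁ hp₂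
  have hpm1 : (0:ℝ) < p - 1 := by linarith
  have h2p : (0:ℝ) < 2 - p := by linarith
  have hm0 : (0:ℝ) < (p - 1) / (2 - p) := div_pos hpm1 h2p
  have ha0 : (0:ℝ) < p / (p - 1) := div_pos (by linarith) hpm1
  have hr0 : (0:ℝ) < ‖y‖ := norm_pos_iff.2 hy
  have hs0 : (0:ℝ) < ‖y‖ ^ 2 := pow_pos hr0 2
  have hW := pW_pos hN hp₁ hp₂ hC ht hs0.le
  set r : ℝ := ‖y‖ with hrdef
  set A : ℝ := (p - 1) / (2 - p) * (p / (p - 1)) * pleK N p with hA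
  set P : ℝ := A * t ^ (-pleAlpha N p - pleBeta N p * (p / (p - 1))) * r ^ (p / (p - 1) - 1)
      * pW N p C t (r ^ 2) ^ (-((p - 1) / (2 - p)) - 1) with hP
  have hA0 : 0 < A := mul_pos (mul_pos hm0 ha0) hk0
  have hP0 : 0 < P := by
    refine mul_pos (mul_pos (mul_pos hA0 ?_) ?_) ?_
    · exact Real.rpow_pos_of_pos ht _
    · exact Real.rpow_pos_of_pos hr0 _
    · exact Real.rpow_pos_of_pos hW _
  have hc : 2 * pBsd N p C t (r ^ 2) = -(P / r) := by
    have e1 : ((r ^ 2 : ℝ)) ^ (p / (p - 1) / 2 - 1) = r ^ (p / (p - 1) - 2) := by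
      rw [← Real.rpow_natCast r 2, ← Real.rpow_mul hr0.le]
      congr 1
      push_cast
      ring
    have e2 : r ^ (p / (p - 1) - 1) = r ^ (p / (p - 1) - 2) * r := by
      rw [show p / (p - 1) - 1 = (p / (p - 1) - 2) + 1 by ring, Real.rpow_add hr0,
        Real.rpow_one]
    have e3 : t ^ (-pleAlpha N p - pleBeta N p * (p / (p - 1)))
        = t ^ (-pleAlpha N p) * t ^ (-(pleBeta N p * (p / (p - 1)))) := by
      rw [← Real.rpow_add ht]
      congr 1
      try ring
    rw [hP, hA, e2, e3]
    unfold pBsd pWs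
    rw [e1]
    field_simp
  have hnorm : ‖(2 * pBsd N p C t (r ^ 2)) • y‖ = P := by
    rw [norm_smul, hc, Real.norm_eq_abs, abs_neg, abs_of_pos (div_pos hP0 hr0), ← hrdef,
      div_mul_cancel₀ _ hr0.ne']
  rw [hnorm, smul_smul, hc]
  congr 1
  have hPp : P ^ (p - 2) * P = P ^ (p - 1) := by
    rw [show p - 1 = (p - 2) + 1 by ring, Real.rpow_add hP0, Real.rpow_one]
  have hPex : P ^ (p - 1) = (1 / pleLambda N p) * t ^ (-pleAlpha N p - 1) * r
      * pW N p C t (r ^ 2) ^ (-((p - 1) / (2 - p))) := by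
    rw [hP]
    rw [Real.mul_rpow (by positivity) (Real.rpow_nonneg hW.le _),
      Real.mul_rpow (by positivity) (Real.rpow_nonneg hr0.le _),
      Real.mul_rpow hA0.le (Real.rpow_nonneg ht.le _)]
    rw [hA, exp_mak hN hp₁ hp₂, ← Real.rpow_mul hL.le,
      show -(1 / (p - 1)) * (p - 1) = -1 by field_simp,
      Real.rpow_neg_one]
    rw [← Real.rpow_mul ht.le, exp_t hN hp₁]
    rw [← Real.rpow_mul hr0.le,
      show (p / (p - 1) - 1) * (p - 1) = 1 by field_simp; ring, Real.rpow_one]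
    rw [← Real.rpow_mul hW.le,
      show (-((p - 1) / (2 - p)) - 1) * (p - 1) = -((p - 1) / (2 - p)) by field_simp; ring]
    rw [inv_eq_one_div]
  have : P ^ (p - 2) * -(P / r) = -(P ^ (p - 1) / r) := by
    rw [← hPp]; ring
  rw [this, hPex]
  unfold pG
  field_simp

lemma divg_eq (hN : 1 ≤ N) (hp₁ : 2 * N / (N + 1) < p) (hp₂ : p < 2) (hC : 0 < C)
    {t : ℝ} (ht : 0 < t) {x : EuclideanSpace ℝ (Fin N)} (hx : x ≠ 0) :
    divg (fun y => ‖gradient (fun z => pleBarenblatt N p C z t) y‖ ^ (p - 2) •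
        gradient (fun z => pleBarenblatt N p C z t) y) x
      = 2 * pGd N p C t (‖x‖ ^ 2) * ‖x‖ ^ 2 + N * pG N p C t (‖x‖ ^ 2) := by
  have hgradfun : ∀ y : EuclideanSpace ℝ (Fin N), y ≠ 0 →
      gradient (fun z => pleBarenblatt N p C z t) y = (2 * pBsd N p C t (‖y‖ ^ 2)) • y :=
    fun y hy => (grad_eq hN hp₁ hp₂ hC ht hy).gradient
  have hV : ∀ y : EuclideanSpace ℝ (Fin N), y ≠ 0 →
      ‖gradient (fun z => pleBarenblatt N p C z t) y‖ ^ (p - 2) •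
        gradient (fun z => pleBarenblatt N p C z t) y = pG N p C t (‖y‖ ^ 2) • y := by
    intro y hy
    rw [hgradfun y hy]
    exact flux_eq hN hp₁ hp₂ hC ht hy
  have hs0 : (0:ℝ) < ‖x‖ ^ 2 := pow_pos (norm_pos_iff.2 hx) 2
  have hderiv : ∀ i : Fin N,
      deriv (fun s : ℝ =>
        (‖gradient (fun z => pleBarenblatt N p C z t)
              (x + s • EuclideanSpace.single i (1:ℝ))‖ ^ (p - 2) •
          gradient (fun z => pleBarenblatt N p C z t)
              (x + s • EuclideanSpace.single i (1:ℝ))) i) 0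
        = 2 * pGd N p C t (‖x‖ ^ 2) * (x i) ^ 2 + pG N p C t (‖x‖ ^ 2) := by
    intro i
    have hcont : ContinuousAt (fun s : ℝ => x + s • EuclideanSpace.single i (1:ℝ)) 0 :=
      Continuous.continuousAt (by continuity)
    have hne : ∀ᶠ s : ℝ in 𝓝 0, x + s • EuclideanSpace.single i (1:ℝ) ≠ 0 :=
      hcont.eventually_ne (by simpa using hx)
    have hev : (fun s : ℝ =>
        (‖gradient (fun z => pleBarenblatt N p C z t)
              (x + s • EuclideanSpace.single i (1:ℝ))‖ ^ (p - 2) •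
          gradient (fun z => pleBarenblatt N p C z t)
              (x + s • EuclideanSpace.single i (1:ℝ))) i)
        =ᶠ[𝓝 (0:ℝ)] fun s => pG N p C t (‖x‖ ^ 2 + 2 * (x i) * s + s ^ 2) * (x i + s) := by
      filter_upwards [hne] with s hs
      rw [hV _ hs]
      have hns : ‖x + s • EuclideanSpace.single i (1:ℝ)‖ ^ 2
          = ‖x‖ ^ 2 + 2 * (x i) * s + s ^ 2 := by
        rw [norm_add_sq_real, real_inner_smul_right, norm_smul]
        simp [EuclideanSpace.inner_single_right, EuclideanSpace.norm_single, mul_pow, sq_abs]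
        ring
      have happ : (x + s • EuclideanSpace.single i (1:ℝ)) i = x i + s := by
        simp [EuclideanSpace.single_apply]
      simp only [PiLp.smul_apply, smul_eq_mul]
      rw [hns, happ]
    rw [hev.deriv_eq]
    have hu : HasDerivAt (fun s : ℝ => ‖x‖ ^ 2 + 2 * (x i) * s + s ^ 2) (2 * (x i)) 0 := by
      have h1 := ((hasDerivAt_id (0:ℝ)).const_mul (2 * (x i))).const_add (‖x‖ ^ 2)
      have h2 := h1.add (hasDerivAt_pow 2 (0:ℝ))
      simpa [Pi.add_def] using h2
    have hGd := pG_hasDerivAt (C := C) hN hp₁ hp₂ hC ht hs0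
    have hGd' : HasDerivAt (fun s' : ℝ => pG N p C t s') (pGd N p C t (‖x‖ ^ 2))
        ((fun s : ℝ => ‖x‖ ^ 2 + 2 * (x i) * s + s ^ 2) 0) := by
      have hpt : ((fun s : ℝ => ‖x‖ ^ 2 + 2 * (x i) * s + s ^ 2) 0) = ‖x‖ ^ 2 := by norm_num
      rw [hpt]; exact hGd
    have hcomp : HasDerivAt (fun s : ℝ => pG N p C t (‖x‖ ^ 2 + 2 * (x i) * s + s ^ 2))
        (pGd N p C t (‖x‖ ^ 2) * (2 * (x i))) 0 :=
      HasDerivAt.comp (h₂ := fun s' => pG N p C t s')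
        (h := fun s => ‖x‖ ^ 2 + 2 * (x i) * s + s ^ 2) 0 hGd' hu
    have hlin : HasDerivAt (fun s : ℝ => x i + s) 1 0 := (hasDerivAt_id 0).const_add (x i)
    have hmul := hcomp.mul hlin
    rw [show (fun s : ℝ => pG N p C t (‖x‖ ^ 2 + 2 * (x i) * s + s ^ 2) * (x i + s))
      = ((fun s : ℝ => pG N p C t (‖x‖ ^ 2 + 2 * (x i) * s + s ^ 2)) * fun s => x i + s)
      from rfl, hmul.deriv]
    norm_num
    ring
  have hsum : divg (fun y => ‖gradient (fun z => pleBarenblatt N p C z t) y‖ ^ (p - 2) •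
        gradient (fun z => pleBarenblatt N p C z t) y) x
      = ∑ i : Fin N, (2 * pGd N p C t (‖x‖ ^ 2) * (x i) ^ 2 + pG N p C t (‖x‖ ^ 2)) :=
    Finset.sum_congr rfl (fun i _ => hderiv i)
  rw [hsum, Finset.sum_add_distrib, Finset.sum_const, Finset.card_univ, Fintype.card_fin,
    ← Finset.mul_sum, sum_sq_eq_norm_sq, nsmul_eq_mul]

lemma tderiv_eq (hN : 1 ≤ N) (hp₁ : 2 * N / (N + 1) < p) (hp₂ : p < 2) (hC : 0 < C)
    {t : ℝ} (ht : 0 < t) (x : EuclideanSpace ℝ (Fin N)) :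
    deriv (fun τ => pleBarenblatt N p C x τ) t
      = -pleAlpha N p * t ^ (-pleAlpha N p - 1) * pW N p C t (‖x‖ ^ 2) ^ (-((p - 1) / (2 - p)))
        + t ^ (-pleAlpha N p) *
          (pleK N p * (-(pleBeta N p * (p / (p - 1))) * t ^ (-(pleBeta N p * (p / (p - 1))) - 1))
              * ((‖x‖ ^ 2 : ℝ)) ^ (p / (p - 1) / 2)
            * -((p - 1) / (2 - p)) * pW N p C t (‖x‖ ^ 2) ^ (-((p - 1) / (2 - p)) - 1)) := by
  have hev : (fun τ => pleBarenblatt N p C x τ) =ᶠ[𝓝 t]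
      (fun τ => τ ^ (-pleAlpha N p) * pW N p C τ (‖x‖ ^ 2) ^ (-((p - 1) / (2 - p)))) := by
    filter_upwards [eventually_gt_nhds ht] with τ hτ
    exact key_eq hN hp₁ hτ x
  rw [hev.deriv_eq]
  have h1 : HasDerivAt (fun τ : ℝ => τ ^ (-pleAlpha N p))
      (-pleAlpha N p * t ^ (-pleAlpha N p - 1)) t :=
    Real.hasDerivAt_rpow_const (Or.inl ht.ne')
  have h2 : HasDerivAt (fun τ : ℝ => pW N p C τ (‖x‖ ^ 2))
      (pleK N p * (-(pleBeta N p * (p / (p - 1))) * t ^ (-(pleBeta N p * (p / (p - 1))) - 1))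
        * ((‖x‖ ^ 2 : ℝ)) ^ (p / (p - 1) / 2)) t := by
    unfold pW
    exact (((Real.hasDerivAt_rpow_const (Or.inl ht.ne')).const_mul (pleK N p)).mul_const
      _).const_add C
  have hW := pW_pos hN hp₁ hp₂ hC ht (sq_nonneg ‖x‖)
  have h3 := h2.rpow_const (p := -((p - 1) / (2 - p))) (Or.inl hW.ne')
  exact (h1.mul h3).deriv

lemma final_id (hN : 1 ≤ N) (hp₁ : 2 * N / (N + 1) < p) (hp₂ : p < 2) (hC : 0 < C)
    {t : ℝ} (ht : 0 < t) {s₀ : ℝ} (hs₀ : 0 < s₀) :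
    -pleAlpha N p * t ^ (-pleAlpha N p - 1) * pW N p C t s₀ ^ (-((p - 1) / (2 - p)))
        + t ^ (-pleAlpha N p) *
          (pleK N p * (-(pleBeta N p * (p / (p - 1))) * t ^ (-(pleBeta N p * (p / (p - 1))) - 1))
              * s₀ ^ (p / (p - 1) / 2)
            * -((p - 1) / (2 - p)) * pW N p C t s₀ ^ (-((p - 1) / (2 - p)) - 1))
      = 2 * pGd N p C t s₀ * s₀ + N * pG N p C t s₀ := by
  have hp1 := ple_one_lt hN hp₁
  have hL := pleLambda_pos hN hp₁
  have hLne : pleLambda N p ≠ 0 := hL.ne'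
  have htne : t ≠ 0 := ht.ne'
  have hsne : s₀ ≠ 0 := hs₀.ne'
  have rpow_succ : ∀ {X : ℝ}, 0 < X → ∀ e : ℝ, X ^ e = X ^ (e - 1) * X := by
    intro X hX e
    have h := Real.rpow_add hX (e - 1) 1
    rw [Real.rpow_one] at h
    rw [← h]
    congr 1
    try ring
  unfold pGd pG pWs
  rw [rpow_succ ht (-pleAlpha N p), rpow_succ ht (-(pleBeta N p * (p / (p - 1)))),
    rpow_succ hs₀ (p / (p - 1) / 2),
    show pleAlpha N p = (N : ℝ) * pleBeta N p from rfl,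
    show pleBeta N p = 1 / pleLambda N p from rfl]
  ring

lemma ple_smooth (hN : 1 ≤ N) (hp₁ : 2 * N / (N + 1) < p) (hp₂ : p < 2) (hC : 0 < C) :
    ContDiffOn ℝ (⊤ : ℕ∞) (fun q => pleBarenblatt N p C q.1 q.2)
      {q : EuclideanSpace ℝ (Fin N) × ℝ | q.1 ≠ 0 ∧ 0 < q.2} := by
  have hp1 := ple_one_lt hN hp₁
  have hk0 := pleK_pos hN hp₁ hp₂
  intro q hq
  obtain ⟨hx, ht⟩ := hq
  apply ContDiffAt.contDiffWithinAt
  have h1 : ContDiffAt ℝ (⊤ : ℕ∞) (fun q : EuclideanSpace ℝ (Fin N) × ℝ => ‖q.1‖) q :=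
    ContDiffAt.comp q (contDiffAt_norm (𝕜 := ℝ) hx) contDiffAt_fst
  have h2 : ContDiffAt ℝ (⊤ : ℕ∞) (fun q : EuclideanSpace ℝ (Fin N) × ℝ => q.2 ^ (-pleBeta N p)) q :=
    ContDiffAt.comp q (Real.contDiffAt_rpow_const_of_ne ht.ne') contDiffAt_snd
  have h3 := h1.mul h2
  have hval : 0 < ‖q.1‖ * q.2 ^ (-pleBeta N p) :=
    mul_pos (norm_pos_iff.2 hx) (Real.rpow_pos_of_pos ht _)
  have h4 : ContDiffAt ℝ (⊤ : ℕ∞) (fun q : EuclideanSpace ℝ (Fin N) × ℝ =>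
      (‖q.1‖ * q.2 ^ (-pleBeta N p)) ^ (p / (p - 1))) q :=
    ContDiffAt.comp q (Real.contDiffAt_rpow_const_of_ne hval.ne') h3
  have h5 : ContDiffAt ℝ (⊤ : ℕ∞) (fun q : EuclideanSpace ℝ (Fin N) × ℝ =>
      C + pleK N p * (‖q.1‖ * q.2 ^ (-pleBeta N p)) ^ (p / (p - 1))) q :=
    contDiffAt_const.add (contDiffAt_const.mul h4)
  have h6 : 0 < C + pleK N p * (‖q.1‖ * q.2 ^ (-pleBeta N p)) ^ (p / (p - 1)) := by
    have := mul_pos hk0 (Real.rpow_pos_of_pos hval (p / (p - 1)))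
    linarith
  have h7 := ContDiffAt.comp q
    (Real.contDiffAt_rpow_const_of_ne (p := -((p - 1) / (2 - p))) h6.ne') h5
  have h8 : ContDiffAt ℝ (⊤ : ℕ∞) (fun q : EuclideanSpace ℝ (Fin N) × ℝ => q.2 ^ (-pleAlpha N p)) q :=
    ContDiffAt.comp q (Real.contDiffAt_rpow_const_of_ne ht.ne') contDiffAt_snd
  exact h8.mul h7

/-- The fast diffusion `p`-Laplacian Barenblatt function is smooth on
`(ℝ^N \ {0}) × (0,∞)` and satisfies the `p`-Laplacian evolution equation
`∂B/∂t = div(|∇B|^{p-2} ∇B)` pointwise there. -/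
theorem ple_barenblatt_solves_ple (N : ℕ) (hN : 1 ≤ N)
    (p : ℝ) (hp₁ : 2 * N / (N + 1) < p) (hp₂ : p < 2) (C : ℝ) (hC : 0 < C) :
    ContDiffOn ℝ (⊤ : ℕ∞) (fun q => pleBarenblatt N p C q.1 q.2)
      {q : EuclideanSpace ℝ (Fin N) × ℝ | q.1 ≠ 0 ∧ 0 < q.2} ∧
    ∀ (x : EuclideanSpace ℝ (Fin N)) (t : ℝ), x ≠ 0 → 0 < t →
      deriv (fun s => pleBarenblatt N p C x s) t
        = divg (fun y =>
            ‖gradient (fun z => pleBarenblatt N p C z t) y‖ ^ (p - 2) •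
              gradient (fun z => pleBarenblatt N p C z t) y) x := by
  constructor
  · exact ple_smooth hN hp₁ hp₂ hC
  · intro x t hx ht
    have hs0 : (0:ℝ) < ‖x‖ ^ 2 := pow_pos (norm_pos_iff.2 hx) 2
    rw [tderiv_eq hN hp₁ hp₂ hC ht x, divg_eq hN hp₁ hp₂ hC ht hx]
    exact final_id hN hp₁ hp₂ hC ht hs0

end main
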